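/- For fixed θ > 0, the map ζ ↦ G(θ,ζ) is a bijection from ℝ onto the interior I of the smallest closed interval containing the support of μ. -/

import Mathlib

/-!
Tilting `μ` by the Gaussian weight `exp (-b²θ/2)` gives a probability measure `ν` with the same
support and exponential moments of all orders, and `μ_{θ,ζ}` is `ν` tilted by `exp (ζ b)`.
Hence `G θ` is the derivative of the cumulant generating function `log mgf ν`, and its own
derivative is the variance of the tilted measure, which is positive since `μ` is not a point
mass: `G θ` is continuous and strictly increasing. The mean of a measure that is not a point mass
lies strictly inside the convex hull of its support. Conversely, if `y < c < b` with `b` in the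
support, then `log mgf ν t ≥ t c + log ν (c, ∞)` for `t ≥ 0`, and by convexity `G θ t` is at least
the slope of `log mgf ν` over `[0, t]`, which exceeds `y` for large `t`; symmetrically on the left,
and the intermediate value theorem gives surjectivity.
-/

open MeasureTheory Real Set

def measSupport (μ : MeasureTheory.Measure ℝ) : Set ℝ :=
  {x : ℝ | ∀ U ∈ nhds x, 0 < μ U}

open ProbabilityTheory

lemma measSupport_eq_support (μ : Measure ℝ) : measSupport μ = μ.support := by
  ext x
  exact (Measure.mem_support_iff_forall x).symm

lemma MeasureTheory.Measure.support_tilted {α : Type*} [TopologicalSpace α] [MeasurableSpace α]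
    {μ : Measure α} {f : α → ℝ} (hf : Integrable (fun x => exp (f x)) μ) :
    (μ.tilted f).support = μ.support :=
  (tilted_absolutelyContinuous μ f).support_mono.antisymm
    (absolutelyContinuous_tilted hf).support_mono

lemma Real.mem_interior_convexHull_iff {S : Set ℝ} {y : ℝ} :
    y ∈ interior (convexHull ℝ S) ↔ (∃ a ∈ S, a < y) ∧ ∃ b ∈ S, y < b := by
  constructor
  · intro hy
    constructor
    · by_contra! h
      have hS : S ⊆ Ici y := fun a ha => h a ha
      have hmem := interior_mono (convexHull_min hS (convex_Ici y)) hy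
      rw [interior_Ici] at hmem
      exact lt_irrefl y hmem
    · by_contra! h
      have hS : S ⊆ Iic y := fun b hb => h b hb
      have hmem := interior_mono (convexHull_min hS (convex_Iic y)) hy
      rw [interior_Iic] at hmem
      exact lt_irrefl y hmem
  · rintro ⟨⟨a, ha, hay⟩, b, hb, hyb⟩
    refine interior_maximal ?_ isOpen_Ioo ⟨hay, hyb⟩
    have hsegment := segment_subset_convexHull (𝕜 := ℝ) ha hb
    rw [segment_eq_Icc (hay.trans hyb).le] at hsegment
    exact Ioo_subset_Icc_self.trans hsegment

lemma integral_mem_interior_convexHull_support {ρ : Measure ℝ} [IsProbabilityMeasure ρ]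
    (hint : Integrable id ρ) (hdeg : ∀ m : ℝ, ¬ ∀ᵐ x ∂ρ, x = m) :
    ∫ x, x ∂ρ ∈ interior (convexHull ℝ ρ.support) := by
  have hmean : ∫ _, ∫ x, x ∂ρ ∂ρ = ∫ x, id x ∂ρ := by simp
  refine Real.mem_interior_convexHull_iff.2 ⟨?_, ?_⟩
  · by_contra! h
    have hle : (fun _ => ∫ x, x ∂ρ) ≤ᵐ[ρ] id := by
      filter_upwards [Measure.support_mem_ae] with x hx using h x hx
    exact hdeg _ (((integral_eq_iff_of_ae_le (integrable_const _) hint hle).1 hmean).mono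
      fun x hx => hx.symm)
  · by_contra! h
    have hle : id ≤ᵐ[ρ] (fun _ => ∫ x, x ∂ρ) := by
      filter_upwards [Measure.support_mem_ae] with x hx using h x hx
    exact hdeg _ ((integral_eq_iff_of_ae_le hint (integrable_const _) hle).1 hmean.symm)

section CumulantGeneratingFunction

variable {ν : Measure ℝ}

lemma mem_interior_integrableExpSet_id (hexp : ∀ t, Integrable (fun x => exp (t * x)) ν) (t : ℝ) :
    t ∈ interior (integrableExpSet id ν) := by
  rw [eq_univ_of_forall (s := integrableExpSet id ν) hexp, interior_univ]
  exact mem_univ t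

lemma differentiable_cgf_id (hexp : ∀ t, Integrable (fun x => exp (t * x)) ν) :
    Differentiable ℝ (cgf id ν) := fun t =>
  (analyticAt_cgf (mem_interior_integrableExpSet_id hexp t)).differentiableAt

lemma differentiable_deriv_cgf_id (hexp : ∀ t, Integrable (fun x => exp (t * x)) ν) :
    Differentiable ℝ (deriv (cgf id ν)) := fun t =>
  (analyticAt_cgf (mem_interior_integrableExpSet_id hexp t)).deriv.differentiableAt

lemma deriv_deriv_cgf_id_eq_variance (hexp : ∀ t, Integrable (fun x => exp (t * x)) ν) (t : ℝ) :
    deriv (deriv (cgf id ν)) t = Var[id; ν.tilted (t * ·)] := by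
  have h := variance_tilted_mul (mem_interior_integrableExpSet_id hexp t)
  rw [iteratedDeriv_succ, iteratedDeriv_one] at h
  exact h.symm

lemma convexOn_cgf_id (hexp : ∀ t, Integrable (fun x => exp (t * x)) ν) :
    ConvexOn ℝ univ (cgf id ν) :=
  convexOn_univ_of_deriv2_nonneg (differentiable_cgf_id hexp) (differentiable_deriv_cgf_id hexp)
    fun t => show 0 ≤ deriv (deriv (cgf id ν)) t from
      (deriv_deriv_cgf_id_eq_variance hexp t).symm ▸ variance_nonneg _ _

lemma strictMono_deriv_cgf_id (hexp : ∀ t, Integrable (fun x => exp (t * x)) ν)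
    (hdeg : ∀ m : ℝ, ¬ ∀ᵐ x ∂ν, x = m) : StrictMono (deriv (cgf id ν)) := by
  refine strictMono_of_deriv_pos fun t => ?_
  rw [deriv_deriv_cgf_id_eq_variance hexp t]
  have hL2 := memLp_tilted_mul (mem_interior_integrableExpSet_id hexp t) 2
  exact (variance_nonneg _ _).lt_of_ne' fun hvar => hdeg _ <|
    (absolutelyContinuous_tilted (hexp t)).ae_le
      (ae_eq_integral_of_variance_eq_zero (by exact_mod_cast hL2) hvar)

lemma mul_add_log_measureReal_le_cgf [IsFiniteMeasure ν] {s : Set ℝ} {t c : ℝ}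
    (ht : Integrable (fun x => exp (t * x)) ν) (hs : MeasurableSet s) (hνs : 0 < ν.real s)
    (hc : ∀ x ∈ s, t * c ≤ t * x) : t * c + log (ν.real s) ≤ cgf id ν t := by
  have hmgf : exp (t * c) * ν.real s ≤ mgf id ν t := calc
    exp (t * c) * ν.real s = ν.real s • exp (t * c) := mul_comm _ _
    _ ≤ ∫ x in s, exp (t * x) ∂ν :=
      setIntegral_ge_of_const_le hs (measure_ne_top ν s) (fun x hx => exp_le_exp.2 (hc x hx))
        ht.integrableOn
    _ ≤ mgf id ν t := setIntegral_le_integral ht (ae_of_all _ fun x => (exp_pos _).le)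
  rw [cgf, ← log_exp (t * c), ← log_mul (exp_ne_zero _) hνs.ne']
  exact log_le_log (by positivity) hmgf

lemma exists_lt_deriv_cgf_id [IsFiniteMeasure ν] (hexp : ∀ t, Integrable (fun x => exp (t * x)) ν)
    {b y : ℝ} (hb : b ∈ ν.support) (hyb : y < b) : ∃ t, y < deriv (cgf id ν) t := by
  obtain ⟨c, hyc, hcb⟩ := exists_between hyb
  have hp : 0 < ν.real (Ioi c) := ENNReal.toReal_pos
    ((Measure.mem_support_iff_forall b).1 hb _ (Ioi_mem_nhds hcb)).ne' (measure_ne_top _ _)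
  obtain ⟨t, ht⟩ := exists_gt (max 0 ((cgf id ν 0 - log (ν.real (Ioi c))) / (c - y)))
  have ht0 : 0 < t := (le_max_left _ _).trans_lt ht
  have hcgf := mul_add_log_measureReal_le_cgf (hexp t) measurableSet_Ioi hp
    fun x hx => mul_le_mul_of_nonneg_left (le_of_lt hx) ht0.le
  have hslope := (convexOn_cgf_id hexp).slope_le_deriv (mem_univ 0) (mem_univ t) ht0
    (differentiable_cgf_id hexp t)
  have hlarge := (div_lt_iff₀ (sub_pos.2 hyc)).1 ((le_max_right _ _).trans_lt ht)
  refine ⟨t, lt_of_lt_of_le ?_ hslope⟩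
  rw [slope_def_field, sub_zero, lt_div_iff₀ ht0]
  linarith

lemma exists_deriv_cgf_id_lt [IsFiniteMeasure ν] (hexp : ∀ t, Integrable (fun x => exp (t * x)) ν)
    {a y : ℝ} (ha : a ∈ ν.support) (hay : a < y) : ∃ t, deriv (cgf id ν) t < y := by
  obtain ⟨c, hac, hcy⟩ := exists_between hay
  have hp : 0 < ν.real (Iio c) := ENNReal.toReal_pos
    ((Measure.mem_support_iff_forall a).1 ha _ (Iio_mem_nhds hac)).ne' (measure_ne_top _ _)
  obtain ⟨t, ht⟩ := exists_lt (min 0 (-(cgf id ν 0 - log (ν.real (Iio c))) / (y - c)))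
  have ht0 : t < 0 := ht.trans_le (min_le_left _ _)
  have hcgf := mul_add_log_measureReal_le_cgf (hexp t) measurableSet_Iio hp
    fun x hx => mul_le_mul_of_nonpos_left (le_of_lt hx) ht0.le
  have hslope := (convexOn_cgf_id hexp).deriv_le_slope (mem_univ t) (mem_univ 0) ht0
    (differentiable_cgf_id hexp t)
  have hlarge := (lt_div_iff₀ (sub_pos.2 hcy)).1 (ht.trans_le (min_le_right _ _))
  refine ⟨t, lt_of_le_of_lt hslope ?_⟩
  rw [slope_def_field, zero_sub, div_lt_iff₀ (neg_pos.2 ht0)]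
  linarith

lemma deriv_cgf_id_mem_interior_convexHull_support
    (hexp : ∀ t, Integrable (fun x => exp (t * x)) ν) (hdeg : ∀ m : ℝ, ¬ ∀ᵐ x ∂ν, x = m) (t : ℝ) :
    deriv (cgf id ν) t ∈ interior (convexHull ℝ ν.support) := by
  have ht := mem_interior_integrableExpSet_id hexp t
  have : NeZero ν := ⟨fun h => hdeg 0 (by simp [h])⟩
  have := isProbabilityMeasure_tilted (hexp t)
  rw [← integral_tilted_mul_self ht, ← Measure.support_tilted (hexp t)]
  have hL1 := memLp_tilted_mul ht 1
  exact integral_mem_interior_convexHull_support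
    (memLp_one_iff_integrable.1 (by exact_mod_cast hL1))
    fun m hm => hdeg m ((absolutelyContinuous_tilted (hexp t)).ae_le hm)

lemma bijOn_deriv_cgf_id [IsFiniteMeasure ν] (hexp : ∀ t, Integrable (fun x => exp (t * x)) ν)
    (hdeg : ∀ m : ℝ, ¬ ∀ᵐ x ∂ν, x = m) :
    BijOn (deriv (cgf id ν)) univ (interior (convexHull ℝ ν.support)) := by
  refine ⟨fun t _ => deriv_cgf_id_mem_interior_convexHull_support hexp hdeg t,
    (strictMono_deriv_cgf_id hexp hdeg).injective.injOn, fun y hy => ?_⟩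
  obtain ⟨⟨a, ha, hay⟩, b, hb, hyb⟩ := Real.mem_interior_convexHull_iff.1 hy
  obtain ⟨t₁, h₁⟩ := exists_deriv_cgf_id_lt hexp ha hay
  obtain ⟨t₂, h₂⟩ := exists_lt_deriv_cgf_id hexp hb hyb
  obtain ⟨t, ht⟩ := intermediate_value_univ t₁ t₂ (differentiable_deriv_cgf_id hexp).continuous
    ⟨h₁.le, h₂.le⟩
  exact ⟨t, mem_univ t, ht⟩

end CumulantGeneratingFunction

lemma integrable_exp_mul_sub_sq_mul {μ : Measure ℝ} [IsFiniteMeasure μ] {θ : ℝ} (hθ : 0 < θ)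
    (t : ℝ) : Integrable (fun x => exp (t * x - x ^ 2 * θ / 2)) μ := by
  refine Integrable.of_bound (by fun_prop) (exp (t ^ 2 / (2 * θ))) (ae_of_all _ fun x => ?_)
  rw [norm_of_nonneg (exp_pos _).le, exp_le_exp, le_div_iff₀ (by positivity)]
  nlinarith [sq_nonneg (θ * x - t)]

lemma forall_not_ae_eq_of_integral_sq_sub_sq_pos {μ : Measure ℝ} [IsProbabilityMeasure μ]
    (hvar : 0 < ∫ x, x ^ 2 ∂μ - (∫ x, x ∂μ) ^ 2) (m : ℝ) : ¬ ∀ᵐ x ∂μ, x = m := fun hm => by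
  rw [integral_congr_ae (hm.mono fun x hx => by rw [hx] : (fun x => x ^ 2) =ᵐ[μ] fun _ => m ^ 2),
    integral_congr_ae hm] at hvar
  simp at hvar

theorem tilted_mean_bijection_onto_interior_convexHull_support_general
    (μ : Measure ℝ) [IsProbabilityMeasure μ]
    (hvar : 0 < ∫ b, b ^ 2 ∂μ - (∫ b, b ∂μ) ^ 2)
    (F G : ℝ → ℝ → ℝ)
    (hF : ∀ θ ζ, F θ ζ = ∫ b, Real.exp (b * ζ - b ^ 2 * θ / 2) ∂μ)
    (tilt : ℝ → ℝ → Measure ℝ)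
    (htilt : ∀ θ ζ, tilt θ ζ
      = μ.withDensity (fun b => ENNReal.ofReal (Real.exp (b * ζ - b ^ 2 * θ / 2) / F θ ζ)))
    (hG : ∀ θ ζ, G θ ζ = ∫ b, b ∂(tilt θ ζ)) :
    ∀ θ ∈ Ioi (0:ℝ),
      Set.BijOn (fun ζ => G θ ζ) Set.univ (interior (convexHull ℝ (measSupport μ))) := by
  intro θ hθ
  have hw := integrable_exp_mul_sub_sq_mul (μ := μ) hθ
  have hw₀ : Integrable (fun x => exp (-(x ^ 2 * θ / 2))) μ := by simpa using hw 0
  set ν := μ.tilted fun x => -(x ^ 2 * θ / 2)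
  have hexp : ∀ t, Integrable (fun x => exp (t * x)) ν := fun t => by
    refine (integrable_tilted_iff hw₀ _).2 ?_
    simpa only [smul_eq_mul, ← exp_add, neg_add_eq_sub, mul_comm t] using hw t
  have hdeg : ∀ m : ℝ, ¬ ∀ᵐ x ∂ν, x = m := fun m hm =>
    forall_not_ae_eq_of_integral_sq_sub_sq_pos hvar m ((absolutelyContinuous_tilted hw₀).ae_le hm)
  have hGν : (fun ζ => G θ ζ) = deriv (cgf id ν) := funext fun ζ => by
    have htiltν : tilt θ ζ = ν.tilted (ζ * ·) := by
      have hexponent :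
          (fun x => -(x ^ 2 * θ / 2)) + (ζ * ·) = fun b => b * ζ - b ^ 2 * θ / 2 := by
        ext x
        simp only [Pi.add_apply]
        ring
      rw [tilted_tilted hw₀, hexponent, htilt, hF]
      rfl
    rw [hG, htiltν, ← integral_tilted_mul_self (mem_interior_integrableExpSet_id hexp ζ)]
    rfl
  rw [hGν, measSupport_eq_support, ← Measure.support_tilted hw₀]
  exact bijOn_deriv_cgf_id hexp hdeg

/-- For fixed `θ > 0`, the map `ζ ↦ G(θ,ζ)` (the mean of the tilted measure `μ_{θ,ζ}`) is a
bijection from `ℝ` onto the interior `I` of the smallest closed interval containing the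
support of `μ` (i.e. the interior of the convex hull of the support). -/
theorem tilted_mean_bijection_onto_interior_convexHull_support
    (μ : Measure ℝ) [IsProbabilityMeasure μ]
    (h2 : Integrable (fun b => b ^ 2) μ)
    (hvar : 0 < ∫ b, b ^ 2 ∂μ - (∫ b, b ∂μ) ^ 2)
    (F G : ℝ → ℝ → ℝ)
    (hF : ∀ θ ζ, F θ ζ = ∫ b, Real.exp (b * ζ - b ^ 2 * θ / 2) ∂μ)
    (tilt : ℝ → ℝ → Measure ℝ)
    (htilt : ∀ θ ζ, tilt θ ζ
      = μ.withDensity (fun b => ENNReal.ofReal (Real.exp (b * ζ - b ^ 2 * θ / 2) / F θ ζ)))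
    (hG : ∀ θ ζ, G θ ζ = ∫ b, b ∂(tilt θ ζ)) :
    ∀ θ ∈ Ioi (0:ℝ),
      Set.BijOn (fun ζ => G θ ζ) Set.univ (interior (convexHull ℝ (measSupport μ))) :=
  tilted_mean_bijection_onto_interior_convexHull_support_general μ hvar F G hF tilt htilt hG
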